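/- At the tangency point θ₀ = 7π/6 with h > 0 fixed by f(θ₀,h) = r², moving along the level curve of f strictly increases g to second order: the function θ ↦ g(θ, h(θ)), where h(θ) is defined implicitly by f(θ,h(θ)) = r², has a strict local minimum at θ₀. -/
import Mathlib


open Real Filter

lemma aux_cos_76 : Real.cos (7 * Real.pi / 6) = -(Real.sqrt 3 / 2) := by
  have h : (7 : ℝ) * Real.pi / 6 = Real.pi + Real.pi / 6 := by ring
  rw [h, Real.cos_add, Real.cos_pi, Real.sin_pi, Real.cos_pi_div_six]
  ring

lemma aux_sin_76 : Real.sin (7 * Real.pi / 6) = -(1 / 2) := by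
  have h : (7 : ℝ) * Real.pi / 6 = Real.pi + Real.pi / 6 := by ring
  rw [h, Real.sin_add, Real.cos_pi, Real.sin_pi, Real.sin_pi_div_six]
  ring

lemma aux_cos_116 : Real.cos (7 * Real.pi / 6 + 2 * Real.pi / 3) = Real.sqrt 3 / 2 := by
  have h : (7 : ℝ) * Real.pi / 6 + 2 * Real.pi / 3 = 2 * Real.pi - Real.pi / 6 := by ring
  rw [h, Real.cos_sub, Real.cos_two_pi, Real.sin_two_pi, Real.cos_pi_div_six]
  ring

/-- Along the rod-length constraint `f(θ, h(θ)) = r²` through the tangency point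
`θ₀ = 7π/6`, the cable constraint function `θ ↦ g(θ, h(θ))` has a strict local minimum
at `θ₀`. -/
theorem stmt15 (r h₀ : ℝ) (hpos : 0 < h₀)
    (hr : 2 * (1 - cos (7 * π / 6)) + h₀ ^ 2 = r ^ 2)
    (h : ℝ → ℝ) (hh0 : h (7 * π / 6) = h₀)
    (hconstraint : ∀ᶠ θ in nhds (7 * π / 6),
      2 * (1 - cos θ) + (h θ) ^ 2 = r ^ 2) :
    ∀ᶠ θ in nhdsWithin (7 * π / 6) {(7 : ℝ) * π / 6}ᶜ,
      2 * (1 - cos (7 * π / 6 + 2 * π / 3)) + h₀ ^ 2 <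
        2 * (1 - cos (θ + 2 * π / 3)) + (h θ) ^ 2 := by
  set θ₀ : ℝ := 7 * π / 6 with hθ₀
  have hπ : (0:ℝ) < π := Real.pi_pos
  have hIoo : ∀ᶠ θ in nhds θ₀, θ ∈ Set.Ioo (θ₀ - 2*π) (θ₀ + 2*π) :=
    Ioo_mem_nhds (by linarith) (by linarith)
  filter_upwards [hconstraint.filter_mono nhdsWithin_le_nhds,
    hIoo.filter_mono nhdsWithin_le_nhds, self_mem_nhdsWithin] with θ hc hI hne
  have hne' : θ - θ₀ ≠ 0 := sub_ne_zero.mpr hne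
  have hcos1 : Real.cos (θ - θ₀) < 1 := by
    have h1 := (Real.cos_eq_one_iff_of_lt_of_lt
      (x := θ - θ₀) (by cases hI with | intro a b => linarith)
      (by cases hI with | intro a b => linarith))
    exact lt_of_le_of_ne (Real.cos_le_one _) (fun he => hne' (h1.mp he))
  have s3 : Real.sqrt 3 ^ 2 = 3 := Real.sq_sqrt (by norm_num)
  have s3pos : (0:ℝ) < Real.sqrt 3 := Real.sqrt_pos.mpr (by norm_num)
  -- expand cos(θ - θ₀)
  have hexp : Real.cos (θ - θ₀) =
      -(Real.sqrt 3 / 2) * Real.cos θ + -(1/2) * Real.sin θ := by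
    rw [Real.cos_sub, aux_cos_76, aux_sin_76]; ring
  -- cos(θ + 2π/3) = -cos θ / 2 - (√3/2) sin θ
  have hexp2 : Real.cos (θ + 2 * π / 3) =
      -(1/2) * Real.cos θ - (Real.sqrt 3 / 2) * Real.sin θ := by
    have h23 : (2:ℝ) * π / 3 = π - π / 3 := by ring
    rw [Real.cos_add, h23, Real.cos_pi_sub, Real.sin_pi_sub,
      Real.cos_pi_div_three, Real.sin_pi_div_three]; ring
  have key : -Real.sqrt 3 < Real.cos θ - Real.cos (θ + 2 * π / 3) := by
    rw [hexp2]
    nlinarith [hexp, hcos1, s3, s3pos]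
  have hLHS : Real.cos θ₀ - Real.cos (θ₀ + 2 * π / 3) = -Real.sqrt 3 := by
    rw [hθ₀, aux_cos_76, aux_cos_116]; ring
  linarith [hr, hc, key, hLHS]
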